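/- arXiv:2112.04389 — 3 statements merged into one kernel-verified Lean document; each statement's English description precedes it below -/
import Mathlib

section
/- Identifiability of the MMDF model: suppose Π, Π̃ are n×K membership matrices of rank K with nonnegative entries, each row summing to 1, and there exists an index set I of K rows such that Π(I,:) = Π̃(I,:) = I_K (the K×K identity). Suppose P, P̃ are K×K symmetric matrices of rank K. If ρ·Π·P·Πᵀ = ρ·Π̃·P̃·Π̃ᵀ for some ρ > 0, then Π = Π̃ and P = P̃. -/
open Matrix MeasureTheory ProbabilityTheory

/-- Smallest eigenvalue of a (Hermitian) real matrix. -/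
noncomputable def eigMin {m : Type*} [Fintype m] [DecidableEq m]
    (M : Matrix m m ℝ) : ℝ :=
  if h : M.IsHermitian then ⨅ i, h.eigenvalues i else 0

/-- Largest eigenvalue of a (Hermitian) real matrix. -/
noncomputable def eigMax {m : Type*} [Fintype m] [DecidableEq m]
    (M : Matrix m m ℝ) : ℝ :=
  if h : M.IsHermitian then ⨆ i, h.eigenvalues i else 0

/-- Singular values of a real matrix: square roots of eigenvalues of `Mᴴ * M`. -/
noncomputable def singVals {m n : Type*} [Fintype m] [Fintype n] [DecidableEq n]
    (M : Matrix m n ℝ) : n → ℝ :=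
  fun i => Real.sqrt ((Matrix.isHermitian_conjTranspose_mul_self M).eigenvalues i)

/-- `k`-th largest value (1-indexed) of a tuple of reals. -/
noncomputable def kthLargest {n : ℕ} (f : Fin n → ℝ) (k : ℕ)
    (hk1 : 1 ≤ k) (hk2 : k ≤ n) : ℝ :=
  f (Tuple.sort f ⟨n - k, by omega⟩)

/-- `k`-th largest singular value (1-indexed) of a real square-indexed matrix. -/
noncomputable def sigma' {m : Type*} {n : ℕ} [Fintype m]
    (M : Matrix m (Fin n) ℝ) (k : ℕ) (hk1 : 1 ≤ k) (hk2 : k ≤ n) : ℝ :=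
  kthLargest (singVals M) k hk1 hk2

/-- Two-to-infinity norm: maximum row ℓ₂-norm. -/
noncomputable def twoInfNorm {m n : Type*} [Fintype m] [Fintype n]
    (M : Matrix m n ℝ) : ℝ :=
  ⨆ i, Real.sqrt (∑ j, (M i j) ^ 2)

/-- Spectral norm: largest singular value. -/
noncomputable def specNorm {m n : Type*} [Fintype m] [Fintype n] [DecidableEq n]
    (M : Matrix m n ℝ) : ℝ :=
  ⨆ i, singVals M i

/-- Maximum absolute row sum norm. -/
noncomputable def rowSumNorm {m n : Type*} [Fintype m] [Fintype n]
    (M : Matrix m n ℝ) : ℝ :=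
  ⨆ i, ∑ j, |M i j|

/-!
The pure-node rows `g` make the membership matrix `M` the identity on them, so the `g × g` block
of `M P Mᵀ` is `P` itself and its `g`-columns form `M P`. Hence the product determines `P`, then
`M P`, and since a full-rank `P` is invertible it determines `M`.
-/

namespace Matrix

theorem isUnit_of_rank_eq_card {m K : Type*} [Fintype m] [DecidableEq m] [Field K]
    {A : Matrix m m K} (h : A.rank = Fintype.card m) : IsUnit A :=
  linearIndependent_cols_iff_isUnit.mp <|
    linearIndependent_iff_card_eq_finrank_span.mpr (h.symm.trans A.rank_eq_finrank_span_cols)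

section Anchor

variable {l l' m k R : Type*} [Fintype k] [NonAssocSemiring R]

theorem submatrix_mul_mul_transpose (A : Matrix m k R) (Q : Matrix k k R) (r : l → m)
    (c : l' → m) :
    (A * Q * Aᵀ).submatrix r c = A.submatrix r id * Q * (A.submatrix c id)ᵀ := by
  ext i j
  simp only [submatrix_apply, mul_apply, transpose_apply, id]

variable [DecidableEq k] {A : Matrix m k R} {g : k → m}

theorem submatrix_mul_mul_transpose_of_submatrix_eq_one (hA : A.submatrix g id = 1)
    (Q : Matrix k k R) : (A * Q * Aᵀ).submatrix g g = Q := by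
  rw [submatrix_mul_mul_transpose, hA, transpose_one, Matrix.one_mul, Matrix.mul_one]

theorem submatrix_id_mul_mul_transpose_of_submatrix_eq_one (hA : A.submatrix g id = 1)
    (Q : Matrix k k R) : (A * Q * Aᵀ).submatrix id g = A * Q := by
  rw [submatrix_mul_mul_transpose, hA, transpose_one, Matrix.mul_one, submatrix_id_id]

end Anchor

end Matrix

theorem stmt_1_general {n K : ℕ} (M M' : Matrix (Fin n) (Fin K) ℝ)
    (P P' : Matrix (Fin K) (Fin K) ℝ) (ρ : ℝ) (hρ : 0 < ρ)
    (g : Fin K → Fin n)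
    (hMg : M.submatrix g id = 1) (hM'g : M'.submatrix g id = 1)
    (hP : P.rank = K)
    (heq : ρ • (M * P * Mᵀ) = ρ • (M' * P' * M'ᵀ)) :
    M = M' ∧ P = P' := by
  have heq' : M * P * Mᵀ = M' * P' * M'ᵀ := smul_right_injective _ hρ.ne' heq
  have hPP' : P = P' := by
    simpa only [submatrix_mul_mul_transpose_of_submatrix_eq_one hMg,
      submatrix_mul_mul_transpose_of_submatrix_eq_one hM'g] using
      congrArg (·.submatrix g g) heq'
  subst hPP'
  have hMP : M * P = M' * P := by
    simpa only [submatrix_id_mul_mul_transpose_of_submatrix_eq_one hMg,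
      submatrix_id_mul_mul_transpose_of_submatrix_eq_one hM'g] using
      congrArg (·.submatrix id g) heq'
  have hdet : IsUnit P.det :=
    (isUnit_iff_isUnit_det P).mp (isUnit_of_rank_eq_card (hP.trans (Fintype.card_fin K).symm))
  refine ⟨?_, rfl⟩
  rw [← mul_nonsing_inv_cancel_right P M hdet, hMP, mul_nonsing_inv_cancel_right P M' hdet]

theorem stmt_1 {n K : ℕ} (M M' : Matrix (Fin n) (Fin K) ℝ)
    (P P' : Matrix (Fin K) (Fin K) ℝ) (ρ : ℝ) (hρ : 0 < ρ)
    (g : Fin K → Fin n)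
    (hM : M.rank = K) (hM' : M'.rank = K)
    (hMnn : ∀ i k, 0 ≤ M i k) (hM'nn : ∀ i k, 0 ≤ M' i k)
    (hMrow : ∀ i, ∑ k, M i k = 1) (hM'row : ∀ i, ∑ k, M' i k = 1)
    (hMg : M.submatrix g id = 1) (hM'g : M'.submatrix g id = 1)
    (hPs : P.IsSymm) (hP's : P'.IsSymm) (hP : P.rank = K) (hP' : P'.rank = K)
    (heq : ρ • (M * P * Mᵀ) = ρ • (M' * P' * M'ᵀ)) :
    M = M' ∧ P = P' :=
  stmt_1_general M M' P P' ρ hρ g hMg hM'g hP heq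
end

section
/- Ideal Simplex lemma: under the MMDF setup with Ω = ρ·Π·P·Πᵀ of rank K and compact eigendecomposition Ω = U·Λ·Uᵀ where U ∈ ℝ^{n×K} has orthonormal columns and Λ ∈ ℝ^{K×K} is invertible diagonal, there exists a unique K×K matrix B with U = Π·B, and moreover B = U(I,:) where I is an index set of pure rows with Π(I,:) = I_K. -/
open Matrix MeasureTheory ProbabilityTheory

/- Since `Uᵀ U = 1` and `Λ` is invertible, `U = Ω U Λ⁻¹`, so the columns of `U` lie in the column
space of `M = Π`: `U = M B`. Then `Uᵀ M B = 1`, so the square matrix `B` is invertible and `B Uᵀ` is a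
left inverse of `M`, which makes `B` unique. Reading `U = M B` off at the pure rows `g`, where
`M(g,:) = I_K`, gives `B = U(g,:)`. -/

namespace Matrix

variable {m k R : Type*} [Fintype k] [DecidableEq k]

theorem eq_mul_of_mul_mul_eq_mul [Fintype m] [CommRing R]
    {U X : Matrix m k R} {L Y : Matrix k m R} {Λ : Matrix k k R}
    (hLU : L * U = 1) (hΛ : IsUnit Λ.det) (h : U * Λ * L = X * Y) :
    U = X * (Y * U * Λ⁻¹) :=
  calc U = U * Λ * (L * U) * Λ⁻¹ := by
        rw [hLU, Matrix.mul_one, Matrix.mul_assoc, mul_nonsing_inv _ hΛ, Matrix.mul_one]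
    _ = X * (Y * U * Λ⁻¹) := by simp only [← Matrix.mul_assoc, h]

theorem mul_mul_eq_one_of_mul_mul_eq_one [Fintype m] [CommRing R]
    {L : Matrix k m R} {M : Matrix m k R} {B : Matrix k k R}
    (h : L * (M * B) = 1) : B * L * M = 1 := by
  rw [← Matrix.mul_assoc] at h
  rw [Matrix.mul_assoc, mul_eq_one_comm.mp h]

theorem submatrix_mul_of_submatrix_eq_one [NonAssocSemiring R] {M : Matrix m k R} {g : k → m}
    (hM : M.submatrix g id = 1) (B : Matrix k k R) : (M * B).submatrix g id = B := by
  rw [submatrix_mul _ _ g id id Function.bijective_id, hM, submatrix_id_id, Matrix.one_mul]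

end Matrix

theorem stmt_2_general {n K : ℕ} (M : Matrix (Fin n) (Fin K) ℝ)
    (P : Matrix (Fin K) (Fin K) ℝ) (ρ : ℝ)
    (g : Fin K → Fin n)
    (hMg : M.submatrix g id = 1)
    (U : Matrix (Fin n) (Fin K) ℝ) (Λ : Matrix (Fin K) (Fin K) ℝ)
    (hΛ : IsUnit Λ.det)
    (hU : Uᵀ * U = 1)
    (hdec : ρ • (M * P * Mᵀ) = U * Λ * Uᵀ) :
    (∃! B : Matrix (Fin K) (Fin K) ℝ, U = M * B) ∧ U = M * U.submatrix g id := by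
  set B₀ := ρ • (P * Mᵀ) * U * Λ⁻¹
  have hB₀ : U = M * B₀ := eq_mul_of_mul_mul_eq_mul hU hΛ <| by
    rw [← hdec, Matrix.mul_smul, ← Matrix.mul_assoc]
  have hleft : B₀ * Uᵀ * M = 1 := mul_mul_eq_one_of_mul_mul_eq_one (hB₀ ▸ hU)
  refine ⟨⟨B₀, hB₀, fun B hB => ?_⟩, ?_⟩
  · calc B = B₀ * Uᵀ * (M * B) := by rw [← Matrix.mul_assoc, hleft, Matrix.one_mul]
      _ = B₀ := by rw [← hB, Matrix.mul_assoc, hU, Matrix.mul_one]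
  · rw [hB₀, submatrix_mul_of_submatrix_eq_one hMg]

theorem stmt_2 {n K : ℕ} (M : Matrix (Fin n) (Fin K) ℝ)
    (P : Matrix (Fin K) (Fin K) ℝ) (ρ : ℝ) (hρ : 0 < ρ)
    (g : Fin K → Fin n)
    (hM : M.rank = K) (hMnn : ∀ i k, 0 ≤ M i k)
    (hMrow : ∀ i, ∑ k, M i k = 1)
    (hMg : M.submatrix g id = 1)
    (hPs : P.IsSymm) (hP : P.rank = K)
    (U : Matrix (Fin n) (Fin K) ℝ) (Λ : Matrix (Fin K) (Fin K) ℝ)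
    (hΛd : Λ.IsDiag) (hΛ : IsUnit Λ.det)
    (hU : Uᵀ * U = 1)
    (hdec : ρ • (M * P * Mᵀ) = U * Λ * Uᵀ) :
    (∃! B : Matrix (Fin K) (Fin K) ℝ, U = M * B) ∧ U = M * U.submatrix g id :=
  stmt_2_general M P ρ g hMg U Λ hΛ hU hdec
end

section
/- If Ω = U·Λ·Uᵀ with U ∈ ℝ^{n×K}, UᵀU = I_K, and U = Π·B for a membership matrix Π whose rows are probability vectors, then the maximum row ℓ₂-norm of U satisfies ‖U‖_{2→∞}² ≤ 1/λ_K(ΠᵀΠ), where λ_K(ΠᵀΠ) is the smallest eigenvalue of ΠᵀΠ. -/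
open Matrix MeasureTheory ProbabilityTheory

/-!
From `UᵀU = I` and `U = ΠB` we get `Bᵀ(ΠᵀΠ)B = I`, hence `BBᵀ = (ΠᵀΠ)⁻¹`, so the squared norm of
row `i` of `U` is `xᵀ(ΠᵀΠ)⁻¹x` for the `i`-th row `x` of `Π`. For a positive definite `A` the
quadratic form `xᵀA⁻¹x` is at most `‖x‖² / λ_min(A)`, and `‖x‖² ≤ 1` for a probability vector `x`.
-/

namespace Matrix

variable {m : Type*} [Fintype m]

lemma sq_dotProduct_le_dotProduct_self_mul (x y : m → ℝ) :
    (x ⬝ᵥ y) ^ 2 ≤ (x ⬝ᵥ x) * (y ⬝ᵥ y) := by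
  simpa only [dotProduct, sq] using Finset.sum_mul_sq_le_sq_mul_sq Finset.univ x y

lemma dotProduct_self_le_one_of_nonneg_of_sum_eq_one {x : m → ℝ} (hx : 0 ≤ x)
    (hsum : ∑ i, x i = 1) : x ⬝ᵥ x ≤ 1 := by
  have hle : x ≤ 1 := fun i ↦
    (Finset.single_le_sum (fun j _ ↦ hx j) (Finset.mem_univ i)).trans_eq hsum
  calc x ⬝ᵥ x ≤ 1 ⬝ᵥ x := dotProduct_le_dotProduct_of_nonneg_right hle hx
    _ = 1 := by rw [one_dotProduct, hsum]

lemma vecMul_dotProduct_vecMul {n : Type*} [Fintype n] (x : m → ℝ) (B : Matrix m n ℝ) :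
    x ᵥ* B ⬝ᵥ x ᵥ* B = x ⬝ᵥ (B * Bᵀ) *ᵥ x := by
  rw [← mulVec_mulVec, dotProduct_mulVec, mulVec_transpose]

variable [DecidableEq m] {A : Matrix m m ℝ}

lemma IsHermitian.eigMin_le_eigenvalues (hA : A.IsHermitian) (i : m) :
    eigMin A ≤ hA.eigenvalues i := by
  rw [eigMin, dif_pos hA]
  exact ciInf_le (Set.finite_range _).bddBelow i

lemma PosSemidef.eigMin_nonneg (hA : A.PosSemidef) : 0 ≤ eigMin A := by
  rw [eigMin, dif_pos hA.isHermitian]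
  exact Real.iInf_nonneg hA.eigenvalues_nonneg

lemma PosDef.eigMin_pos [Nonempty m] (hA : A.PosDef) : 0 < eigMin A := by
  obtain ⟨i, hi⟩ := exists_eq_ciInf_of_finite (f := hA.isHermitian.eigenvalues)
  rw [eigMin, dif_pos hA.isHermitian, ← hi]
  exact hA.eigenvalues_pos i

lemma IsHermitian.posSemidef_sub_smul_one {c : ℝ} (hA : A.IsHermitian)
    (hc : ∀ i, c ≤ hA.eigenvalues i) : (A - c • 1).PosSemidef := by
  set V : Matrix m m ℝ := (hA.eigenvectorUnitary : Matrix m m ℝ)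
  have hV : V * Vᴴ = 1 := Unitary.mul_star_self_of_mem hA.eigenvectorUnitary.2
  have hdiag : (diagonal (fun i ↦ hA.eigenvalues i - c)).PosSemidef :=
    posSemidef_diagonal_iff.mpr fun i ↦ sub_nonneg.mpr (hc i)
  convert hdiag.mul_mul_conjTranspose_same V using 1
  conv_lhs => rw [hA.spectral_theorem, Unitary.conjStarAlgAut_apply]
  have hsub : diagonal (fun i ↦ hA.eigenvalues i - c) = diagonal hA.eigenvalues - c • 1 := by
    rw [smul_one_eq_diagonal, diagonal_sub]
  rw [hsub, Matrix.mul_sub, Matrix.sub_mul, Matrix.mul_smul, Matrix.smul_mul, Matrix.mul_one, hV]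
  rfl

lemma IsHermitian.eigMin_mul_dotProduct_le (hA : A.IsHermitian) (x : m → ℝ) :
    eigMin A * (x ⬝ᵥ x) ≤ x ⬝ᵥ A *ᵥ x := by
  have := (hA.posSemidef_sub_smul_one hA.eigMin_le_eigenvalues).dotProduct_mulVec_nonneg x
  simpa [sub_mulVec, dotProduct_sub, smul_mulVec, sub_nonneg] using this

lemma PosDef.dotProduct_inv_mulVec_le_div_eigMin (hA : A.PosDef) (x : m → ℝ) :
    x ⬝ᵥ A⁻¹ *ᵥ x ≤ (x ⬝ᵥ x) / eigMin A := by
  rcases isEmpty_or_nonempty m with hm | hm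
  · simp [dotProduct]
  set w := A⁻¹ *ᵥ x
  have hAw : A *ᵥ w = x := by
    rw [mulVec_mulVec, mul_nonsing_inv _ (A.isUnit_iff_isUnit_det.mp hA.isUnit), one_mulVec]
  have hray : eigMin A * (w ⬝ᵥ w) ≤ x ⬝ᵥ w := by
    simpa only [hAw, dotProduct_comm w x] using hA.isHermitian.eigMin_mul_dotProduct_le w
  have hpos := hA.eigMin_pos
  have hww : 0 ≤ w ⬝ᵥ w := dotProduct_self_star_nonneg w
  have hxx : 0 ≤ x ⬝ᵥ x := dotProduct_self_star_nonneg x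
  have hxw : 0 ≤ x ⬝ᵥ w := (mul_nonneg hpos.le hww).trans hray
  -- Rayleigh for `w` combined with Cauchy–Schwarz; then cancel one factor `x ⬝ᵥ w`.
  have key : eigMin A * (x ⬝ᵥ w) ^ 2 ≤ (x ⬝ᵥ x) * (x ⬝ᵥ w) :=
    calc eigMin A * (x ⬝ᵥ w) ^ 2 ≤ eigMin A * ((x ⬝ᵥ x) * (w ⬝ᵥ w)) :=
          mul_le_mul_of_nonneg_left (sq_dotProduct_le_dotProduct_self_mul x w) hpos.le
      _ = (x ⬝ᵥ x) * (eigMin A * (w ⬝ᵥ w)) := by ring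
      _ ≤ (x ⬝ᵥ x) * (x ⬝ᵥ w) := mul_le_mul_of_nonneg_left hray hxx
  rw [le_div_iff₀ hpos]
  rcases hxw.eq_or_lt with hzero | hxw
  · simpa [← hzero] using hxx
  · exact le_of_mul_le_mul_right (by linear_combination key) hxw

end Matrix

theorem stmt_5_general {n K : ℕ} (M : Matrix (Fin n) (Fin K) ℝ)
    (hMnn : ∀ i k, 0 ≤ M i k)
    (hMrow : ∀ i, ∑ k, M i k = 1)
    (U : Matrix (Fin n) (Fin K) ℝ) (B : Matrix (Fin K) (Fin K) ℝ)
    (hU : Uᵀ * U = 1) (hUB : U = M * B) :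
    (⨆ i, ∑ j, (U i j) ^ 2) ≤ 1 / eigMin (Mᵀ * M) := by
  have hBAB : Bᵀ * (Mᵀ * M) * B = 1 := by
    rw [← hU, hUB, transpose_mul]
    simp only [Matrix.mul_assoc]
  have hinv : B * Bᵀ * (Mᵀ * M) = 1 := by
    rw [Matrix.mul_assoc, mul_eq_one_comm.mp hBAB]
  have hPD : (Mᵀ * M).PosDef := by
    have hPSD : (Mᵀ * M).PosSemidef := by simpa using posSemidef_conjTranspose_mul_self M
    exact hPSD.posDef_iff_isUnit.mpr (IsUnit.of_mul_eq_one_right _ hinv)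
  refine Real.iSup_le (fun i ↦ ?_) (div_nonneg zero_le_one hPD.posSemidef.eigMin_nonneg)
  calc ∑ j, U i j ^ 2 = M i ᵥ* B ⬝ᵥ M i ᵥ* B := by
        simp only [hUB, mul_apply_eq_vecMul, dotProduct, sq]
    _ = M i ⬝ᵥ (Mᵀ * M)⁻¹ *ᵥ M i := by
        rw [vecMul_dotProduct_vecMul, inv_eq_left_inv hinv]
    _ ≤ (M i ⬝ᵥ M i) / eigMin (Mᵀ * M) := hPD.dotProduct_inv_mulVec_le_div_eigMin (M i)
    _ ≤ 1 / eigMin (Mᵀ * M) := div_le_div_of_nonneg_right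
        (dotProduct_self_le_one_of_nonneg_of_sum_eq_one (hMnn i) (hMrow i))
        hPD.posSemidef.eigMin_nonneg

theorem stmt_5 {n K : ℕ} (M : Matrix (Fin n) (Fin K) ℝ)
    (hM : M.rank = K) (hMnn : ∀ i k, 0 ≤ M i k)
    (hMrow : ∀ i, ∑ k, M i k = 1)
    (U : Matrix (Fin n) (Fin K) ℝ) (B : Matrix (Fin K) (Fin K) ℝ)
    (hU : Uᵀ * U = 1) (hUB : U = M * B) :
    (⨆ i, ∑ j, (U i j) ^ 2) ≤ 1 / eigMin (Mᵀ * M) :=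
  stmt_5_general M hMnn hMrow U B hU hUB
end
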